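/- Selective PPT monotonicity of generalized Rains relative entropies: let 𝐃(ω‖τ) be a function of states ω and positive semidefinite operators τ, taking values in ℝ∪{+∞}, satisfying (i) the data-processing inequality 𝐃(ω‖τ) ≥ 𝐃(N(ω)‖N(τ)) for every completely positive trace-preserving map N, and (ii) the direct-sum inequality 𝐃(κ‖λ) ≥ D(p‖q) + ∑_x p(x) 𝐃(κ_x‖λ_x) for all classical–quantum κ = ∑_x p(x)|x⟩⟨x|⊗κ_x and λ = ∑_x q(x)|x⟩⟨x|⊗λ_x. Define 𝐑(ρ) = inf over states σ on H_A⊗H_B of [𝐃(ρ‖σ) + log₂‖(id⊗T)(σ)‖₁]. Then for every bipartite state ρ and every selective PPT operation {P_x}_x, with p(x) = Tr[P_x(ρ)] and ρ_x = P_x(ρ)/p(x), one has 𝐑(ρ) ≥ ∑_{x : p(x)>0} p(x) 𝐑(ρ_x). -/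

import Mathlib

/-!
Fix a state `σ`. The flag map `ω ↦ ∑ₓ |x⟩⟨x| ⊗ Pₓ(ω)` is completely positive and trace
preserving and sends `ρ` and `σ` to classical–quantum operators with weights `p(x) = Tr Pₓ(ρ)`,
`q(x) = Tr Pₓ(σ)` and conditional states `ρₓ`, `σₓ`; data processing followed by the direct-sum
inequality gives `𝐃(ρ‖σ) ≥ D(p‖q) + ∑ₓ p(x) 𝐃(ρₓ‖σₓ)`. Testing `𝐑(ρₓ)` against `σₓ` gives
`𝐑(ρₓ) ≤ 𝐃(ρₓ‖σₓ) + log₂ (tₓ / q(x))` with `tₓ = ‖(id⊗T)(Pₓ(σ))‖₁`. Because every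
`(id⊗T) ∘ Pₓ ∘ (id⊗T)` is positive and `∑ₓ Pₓ` preserves the trace, splitting `(id⊗T)(σ)` into
its positive and negative parts shows `∑ₓ tₓ ≤ ‖(id⊗T)(σ)‖₁`, and concavity of the logarithm
then bounds `∑ₓ p(x) log₂ (tₓ / q(x))` by `D(p‖q) + log₂ ‖(id⊗T)(σ)‖₁`. Summing up and taking the
infimum over `σ` gives the claim.
-/

open scoped Matrix Classical ComplexOrder

namespace RainsPaper

/-- Natural matrix logarithm of a Hermitian matrix via spectral decomposition
(with the convention `log 0 = 0` on the kernel); junk value `0` otherwise. -/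
noncomputable def matLog {n : Type} [Fintype n] [DecidableEq n] (A : Matrix n n ℂ) :
    Matrix n n ℂ :=
  if hA : A.IsHermitian then
    (hA.eigenvectorUnitary : Matrix n n ℂ) *
      (Matrix.diagonal fun i => (Real.log (hA.eigenvalues i) : ℂ)) *
      (star (hA.eigenvectorUnitary : Matrix n n ℂ))
  else 0

/-- Real power of a Hermitian matrix via spectral decomposition (with the convention
`0 ^ r = 0` for `r ≠ 0`, so negative powers are taken on the support);
junk value `0` otherwise. -/
noncomputable def matPow {n : Type} [Fintype n] [DecidableEq n] (A : Matrix n n ℂ) (r : ℝ) :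
    Matrix n n ℂ :=
  if hA : A.IsHermitian then
    (hA.eigenvectorUnitary : Matrix n n ℂ) *
      (Matrix.diagonal fun i => ((hA.eigenvalues i ^ r : ℝ) : ℂ)) *
      (star (hA.eigenvectorUnitary : Matrix n n ℂ))
  else 0

/-- A state is a positive semidefinite operator with unit trace. -/
def IsState {n : Type} [Fintype n] (ρ : Matrix n n ℂ) : Prop :=
  ρ.PosSemidef ∧ ρ.trace = 1

/-- `supp ω ⊆ supp τ`, expressed (for Hermitian matrices) as `ker τ ⊆ ker ω`. -/
def SuppSubset {n : Type} [Fintype n] (ω τ : Matrix n n ℂ) : Prop :=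
  ∀ v : n → ℂ, τ.mulVec v = 0 → ω.mulVec v = 0

/-- Trace norm `‖X‖₁ = Tr √(X†X)`. -/
noncomputable def traceNorm {n : Type} [Fintype n] [DecidableEq n] (X : Matrix n n ℂ) : ℝ :=
  ((matPow (Xᴴ * X) 2⁻¹).trace).re

/-- Fidelity `F(ω,τ) = ‖√ω √τ‖₁²`. -/
noncomputable def fidelity {n : Type} [Fintype n] [DecidableEq n] (ω τ : Matrix n n ℂ) : ℝ :=
  (traceNorm (matPow ω 2⁻¹ * matPow τ 2⁻¹)) ^ 2

/-- Extended base-2 logarithm: `elog2 x = log₂ x` for `x > 0` and `-∞` for `x ≤ 0`. -/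
noncomputable def elog2 (x : ℝ) : EReal :=
  if x ≤ 0 then ⊥ else ((Real.logb 2 x : ℝ) : EReal)

/-- Quantum relative entropy `D(ω‖τ) = Tr[ω (log₂ ω - log₂ τ)]` if `supp ω ⊆ supp τ`,
and `+∞` otherwise. -/
noncomputable def qRelEnt {n : Type} [Fintype n] [DecidableEq n] (ω τ : Matrix n n ℂ) : EReal :=
  if SuppSubset ω τ then
    ((((ω * (matLog ω - matLog τ)).trace).re / Real.log 2 : ℝ) : EReal)
  else ⊤

/-- Sandwiched Rényi relative entropy
`D̃_α(ω‖τ) = (α-1)⁻¹ log₂ Tr[(τ^{(1-α)/(2α)} ω τ^{(1-α)/(2α)})^α]` when `α ∈ (0,1)`, or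
`α > 1` and `supp ω ⊆ supp τ`; `+∞` otherwise. -/
noncomputable def sandRenyi {n : Type} [Fintype n] [DecidableEq n] (α : ℝ)
    (ω τ : Matrix n n ℂ) : EReal :=
  if (0 < α ∧ α < 1) ∨ (1 < α ∧ SuppSubset ω τ) then
    (((α - 1)⁻¹ : ℝ) : EReal) *
      elog2 (((matPow (matPow τ ((1 - α) / (2 * α)) * ω * matPow τ ((1 - α) / (2 * α))) α).trace).re)
  else ⊤

/-- Petz Rényi relative entropy `D_α(ω‖τ) = (α-1)⁻¹ log₂ Tr[ω^α τ^{1-α}]` when `α ∈ (0,1)`,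
or `α > 1` and `supp ω ⊆ supp τ`; `+∞` otherwise. -/
noncomputable def petzRenyi {n : Type} [Fintype n] [DecidableEq n] (α : ℝ)
    (ω τ : Matrix n n ℂ) : EReal :=
  if (0 < α ∧ α < 1) ∨ (1 < α ∧ SuppSubset ω τ) then
    (((α - 1)⁻¹ : ℝ) : EReal) * elog2 (((matPow ω α * matPow τ (1 - α)).trace).re)
  else ⊤

/-- Geometric Rényi relative entropy `D̂_α(ω‖τ) = (α-1)⁻¹ log₂ Tr[τ (τ^{-1/2} ω τ^{-1/2})^α]`
(inverses on the support) when `α ∈ (0,1)`, or `α > 1` and `supp ω ⊆ supp τ`; `+∞` otherwise. -/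
noncomputable def geomRenyi {n : Type} [Fintype n] [DecidableEq n] (α : ℝ)
    (ω τ : Matrix n n ℂ) : EReal :=
  if (0 < α ∧ α < 1) ∨ (1 < α ∧ SuppSubset ω τ) then
    (((α - 1)⁻¹ : ℝ) : EReal) *
      elog2 (((τ * matPow (matPow τ (-2⁻¹) * ω * matPow τ (-2⁻¹)) α).trace).re)
  else ⊤

/-- Classical relative entropy `D(p‖q)`, equal to `+∞` unless `supp p ⊆ supp q`
(terms with `p x = 0` contribute zero). -/
noncomputable def cRelEnt {X : Type} [Fintype X] (p q : X → ℝ) : EReal :=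
  if ∀ x, p x ≠ 0 → q x ≠ 0 then
    ((∑ x, p x * Real.logb 2 (p x / q x) : ℝ) : EReal)
  else ⊤

/-- `p` is a probability distribution on the finite set `X`. -/
def IsProb {X : Type} [Fintype X] (p : X → ℝ) : Prop :=
  (∀ x, 0 ≤ p x) ∧ ∑ x, p x = 1

/-- The classical–quantum operator `∑ x p(x) |x⟩⟨x| ⊗ K x`. -/
noncomputable def cqOp {X A : Type} [DecidableEq X] (p : X → ℝ)
    (K : X → Matrix A A ℂ) : Matrix (X × A) (X × A) ℂ :=
  Matrix.of fun a b => if a.1 = b.1 then (p a.1 : ℂ) * K a.1 a.2 b.2 else 0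

/-- Partial transpose (on the second tensor factor):
`(id ⊗ T)(X)_{(i,k),(j,l)} = X_{(i,l),(j,k)}`. -/
def ptrans {a b : Type} (X : Matrix (a × b) (a × b) ℂ) : Matrix (a × b) (a × b) ℂ :=
  Matrix.of fun p q => X (p.1, q.2) (q.1, p.2)

/-- The partial transpose as a linear map. -/
def ptransL {a b : Type} : Matrix (a × b) (a × b) ℂ →ₗ[ℂ] Matrix (a × b) (a × b) ℂ where
  toFun := ptrans
  map_add' _ _ := rfl
  map_smul' _ _ := rfl

/-- `PPT'` : positive semidefinite bipartite operators whose partial transpose has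
trace norm at most 1. -/
def PPTprime {a b : Type} [Fintype a] [Fintype b] [DecidableEq a] [DecidableEq b]
    (σ : Matrix (a × b) (a × b) ℂ) : Prop :=
  σ.PosSemidef ∧ traceNorm (ptrans σ) ≤ 1

/-- The Rains relative entropy `R(ρ) = inf_{σ ∈ PPT'} D(ρ‖σ)`. -/
noncomputable def Rains {a b : Type} [Fintype a] [Fintype b] [DecidableEq a] [DecidableEq b]
    (ρ : Matrix (a × b) (a × b) ℂ) : EReal :=
  ⨅ σ : {σ : Matrix (a × b) (a × b) ℂ // PPTprime σ}, qRelEnt ρ σ.1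

/-- The sandwiched Rényi Rains relative entropy `R̃_α(ρ) = inf_{σ ∈ PPT'} D̃_α(ρ‖σ)`. -/
noncomputable def sandRains {a b : Type} [Fintype a] [Fintype b] [DecidableEq a] [DecidableEq b]
    (α : ℝ) (ρ : Matrix (a × b) (a × b) ℂ) : EReal :=
  ⨅ σ : {σ : Matrix (a × b) (a × b) ℂ // PPTprime σ}, sandRenyi α ρ σ.1

/-- The extension `id_{Fin k} ⊗ Φ` of a linear map on matrices. -/
def matExt {n m : Type} [Fintype n] [Fintype m]
    (Φ : Matrix n n ℂ →ₗ[ℂ] Matrix m m ℂ) (k : ℕ)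
    (X : Matrix (Fin k × n) (Fin k × n) ℂ) : Matrix (Fin k × m) (Fin k × m) ℂ :=
  Matrix.of fun p q => Φ (Matrix.of fun i j => X (p.1, i) (q.1, j)) p.2 q.2

/-- Complete positivity: all extensions `id_k ⊗ Φ` preserve positive semidefiniteness. -/
def IsCP {n m : Type} [Fintype n] [Fintype m]
    (Φ : Matrix n n ℂ →ₗ[ℂ] Matrix m m ℂ) : Prop :=
  ∀ (k : ℕ) (X : Matrix (Fin k × n) (Fin k × n) ℂ), X.PosSemidef → (matExt Φ k X).PosSemidef

/-- Trace preservation. -/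
def IsTP {n m : Type} [Fintype n] [Fintype m]
    (Φ : Matrix n n ℂ →ₗ[ℂ] Matrix m m ℂ) : Prop :=
  ∀ X : Matrix n n ℂ, (Φ X).trace = X.trace

/-- A selective PPT operation: a family of completely positive maps `P x` such that
`(id ⊗ T) ∘ P x ∘ (id ⊗ T)` is completely positive for every `x` and `∑ x, P x` is
trace preserving. -/
def IsSelectivePPT {a b a' b' X : Type} [Fintype a] [Fintype b] [Fintype a'] [Fintype b']
    [Fintype X]
    (P : X → (Matrix (a × b) (a × b) ℂ →ₗ[ℂ] Matrix (a' × b') (a' × b') ℂ)) : Prop :=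
  (∀ x, IsCP (P x)) ∧ (∀ x, IsCP (ptransL ∘ₗ P x ∘ₗ ptransL)) ∧
    (∀ ρ : Matrix (a × b) (a × b) ℂ, ∑ x, ((P x) ρ).trace = ρ.trace)

/-- The maximally entangled state `Φ^d = |Φ^d⟩⟨Φ^d|`, `|Φ^d⟩ = d^{-1/2} ∑ i |i⟩|i⟩`. -/
noncomputable def maxEnt (d : ℕ) : Matrix (Fin d × Fin d) (Fin d × Fin d) ℂ :=
  Matrix.of fun p q => if p.1 = p.2 ∧ q.1 = q.2 then ((d : ℂ))⁻¹ else 0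

/-- Binary entropy `h₂(ε) = -ε log₂ ε - (1-ε) log₂ (1-ε)`. -/
noncomputable def h2 (ε : ℝ) : ℝ :=
  -ε * Real.logb 2 ε - (1 - ε) * Real.logb 2 (1 - ε)

open Matrix

section PosSemidef

variable {n : Type} [Fintype n]

lemma _root_.Matrix.PosSemidef.ofReal_re_trace {A : Matrix n n ℂ} (hA : A.PosSemidef) :
    ((A.trace.re : ℝ) : ℂ) = A.trace :=
  (Complex.eq_re_of_ofReal_le hA.trace_nonneg).symm

lemma _root_.Matrix.PosSemidef.re_trace_nonneg {A : Matrix n n ℂ} (hA : A.PosSemidef) :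
    0 ≤ A.trace.re :=
  (Complex.nonneg_iff.mp hA.trace_nonneg).1

open scoped MatrixOrder Matrix.Norms.L2Operator in
lemma _root_.Matrix.posSemidef_blockDiagonal {o : Type} [Fintype o] [DecidableEq o]
    {M : o → Matrix n n ℂ} (hM : ∀ i, (M i).PosSemidef) : (blockDiagonal M).PosSemidef := by
  choose B hB using fun i => CStarAlgebra.nonneg_iff_eq_star_mul_self.mp (hM i).nonneg
  have hM_eq : blockDiagonal M = (blockDiagonal B)ᴴ * blockDiagonal B := by
    rw [blockDiagonal_conjTranspose, ← blockDiagonal_mul]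
    exact congrArg blockDiagonal (funext hB)
  rw [hM_eq]
  exact posSemidef_conjTranspose_mul_self _

lemma IsState.nonempty {ρ : Matrix n n ℂ} (hρ : IsState ρ) : Nonempty n := by
  by_contra h
  rw [not_nonempty_iff] at h
  simpa [trace] using hρ.2

lemma exists_isState [DecidableEq n] [Nonempty n] : ∃ τ : Matrix n n ℂ, IsState τ := by
  have hcard : (Fintype.card n : ℝ) ≠ 0 := by positivity
  refine ⟨(Fintype.card n : ℝ)⁻¹ • 1, PosSemidef.one.smul (by positivity), ?_⟩
  rw [trace_smul, trace_one, Complex.real_smul]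
  push_cast
  exact inv_mul_cancel₀ (mod_cast hcard)

lemma isState_inv_re_trace_smul {M : Matrix n n ℂ} (hM : M.PosSemidef) (hM0 : 0 < M.trace.re) :
    IsState (M.trace.re⁻¹ • M) := by
  refine ⟨hM.smul (inv_nonneg.mpr hM0.le), ?_⟩
  rw [trace_smul, Complex.real_smul]
  nth_rw 2 [← hM.ofReal_re_trace]
  rw [← Complex.ofReal_mul, inv_mul_cancel₀ hM0.ne', Complex.ofReal_one]

end PosSemidef

section TraceNorm

open scoped MatrixOrder Matrix.Norms.L2Operator

variable {n : Type} [Fintype n] [DecidableEq n]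

lemma matPow_eq_cfc {A : Matrix n n ℂ} (hA : A.IsHermitian) (r : ℝ) :
    matPow A r = cfc (fun x : ℝ => x ^ r) A := by
  rw [matPow, dif_pos hA, hA.cfc_eq, IsHermitian.cfc, Unitary.conjStarAlgAut_apply]
  rfl

lemma traceNorm_eq_re_trace_abs (X : Matrix n n ℂ) : traceNorm X = (CFC.abs X).trace.re := by
  have hXX : 0 ≤ Xᴴ * X := (posSemidef_conjTranspose_mul_self X).nonneg
  rw [traceNorm, matPow_eq_cfc hXX.isSelfAdjoint, ← CFC.rpow_eq_cfc_real hXX, CFC.abs,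
    CFC.sqrt_eq_rpow, one_div, star_eq_conjTranspose]

lemma traceNorm_nonneg (X : Matrix n n ℂ) : 0 ≤ traceNorm X := by
  rw [traceNorm_eq_re_trace_abs]
  exact (Complex.nonneg_iff.mp (CFC.abs_nonneg X).posSemidef.trace_nonneg).1

lemma traceNorm_smul (X : Matrix n n ℂ) {c : ℝ} (hc : 0 ≤ c) :
    traceNorm (c • X) = c * traceNorm X := by
  rw [traceNorm_eq_re_trace_abs, traceNorm_eq_re_trace_abs, ← Complex.coe_smul, CFC.abs_smul,
    trace_smul]
  simp [hc]

lemma trace_cfc {A : Matrix n n ℂ} (hA : A.IsHermitian) (f : ℝ → ℝ) :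
    (cfc f A).trace = ∑ i, ((f (hA.eigenvalues i) : ℝ) : ℂ) := by
  rw [hA.cfc_eq, IsHermitian.cfc, Unitary.conjStarAlgAut_apply, trace_mul_cycle,
    Unitary.coe_star_mul_self, one_mul, trace_diagonal]
  rfl

lemma traceNorm_eq_sum_abs_eigenvalues {A : Matrix n n ℂ} (hA : A.IsHermitian) :
    traceNorm A = ∑ i, |hA.eigenvalues i| := by
  rw [traceNorm_eq_re_trace_abs, CFC.abs_eq_cfc_norm A hA, trace_cfc hA]
  simp

lemma traceNorm_eq_re_trace_posPart_add_negPart {A : Matrix n n ℂ} (hA : A.IsHermitian) :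
    traceNorm A = (A⁺).trace.re + (A⁻).trace.re := by
  rw [traceNorm_eq_re_trace_abs, ← CFC.posPart_add_negPart A hA, trace_add, Complex.add_re]

lemma re_trace_le_traceNorm {A : Matrix n n ℂ} (hA : A.IsHermitian) :
    A.trace.re ≤ traceNorm A := by
  rw [traceNorm_eq_sum_abs_eigenvalues hA, hA.trace_eq_sum_eigenvalues, Complex.re_sum]
  exact Finset.sum_le_sum fun i _ => by simpa using le_abs_self _

lemma traceNorm_sub_le {S T : Matrix n n ℂ} (hS : S.PosSemidef) (hT : T.PosSemidef) :
    traceNorm (S - T) ≤ S.trace.re + T.trace.re := by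
  have hK : (S - T).IsHermitian := hS.isHermitian.sub hT.isHermitian
  set U : Matrix n n ℂ := (hK.eigenvectorUnitary : Matrix n n ℂ)
  have hdiag : ∀ i, hK.eigenvalues i = ((star U * S * U) i i).re - ((star U * T * U) i i).re :=
    fun i => by
      have := congrArg (fun M => (M i i).re) hK.conjStarAlgAut_star_eigenvectorUnitary
      simpa [mul_sub, sub_mul] using this.symm
  have hdiag_nonneg : ∀ {M : Matrix n n ℂ}, M.PosSemidef → ∀ i, 0 ≤ ((star U * M * U) i i).re :=
    fun hM i => (Complex.nonneg_iff.mp (hM.conjTranspose_mul_mul_same U).diag_nonneg).1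
  have htrace : ∀ M : Matrix n n ℂ, (star U * M * U).trace = M.trace := fun M => by
    rw [trace_mul_cycle, Unitary.mul_star_self_of_mem hK.eigenvectorUnitary.2, one_mul]
  calc traceNorm (S - T) = ∑ i, |hK.eigenvalues i| := traceNorm_eq_sum_abs_eigenvalues hK
    _ ≤ ∑ i, (((star U * S * U) i i).re + ((star U * T * U) i i).re) :=
        Finset.sum_le_sum fun i _ => by
          rw [hdiag i]
          refine (abs_sub _ _).trans_eq ?_
          rw [abs_of_nonneg (hdiag_nonneg hS i), abs_of_nonneg (hdiag_nonneg hT i)]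
    _ = S.trace.re + T.trace.re := by
        rw [Finset.sum_add_distrib, ← htrace S, ← htrace T, trace, trace, Complex.re_sum,
          Complex.re_sum]
        rfl

end TraceNorm

section PartialTranspose

variable {a b : Type}

@[simp]
lemma ptrans_ptrans (M : Matrix (a × b) (a × b) ℂ) : ptrans (ptrans M) = M := rfl

lemma ptrans_smul (c : ℝ) (M : Matrix (a × b) (a × b) ℂ) : ptrans (c • M) = c • ptrans M := rfl

@[simp]
lemma ptransL_apply (M : Matrix (a × b) (a × b) ℂ) : ptransL M = ptrans M := rfl

@[simp]
lemma trace_ptrans [Fintype a] [Fintype b] (M : Matrix (a × b) (a × b) ℂ) :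
    (ptrans M).trace = M.trace :=
  rfl

lemma isHermitian_ptrans {M : Matrix (a × b) (a × b) ℂ} (hM : M.IsHermitian) :
    (ptrans M).IsHermitian := by
  ext p q
  exact hM.apply (p.1, q.2) (q.1, p.2)

end PartialTranspose

section CompletelyPositive

variable {m l : Type} [Fintype m] [Fintype l]

lemma IsCP.posSemidef_map {Φ : Matrix m m ℂ →ₗ[ℂ] Matrix l l ℂ} (hΦ : IsCP Φ)
    {R : Matrix m m ℂ} (hR : R.PosSemidef) : (Φ R).PosSemidef :=
  (hΦ 1 _ (hR.submatrix Prod.snd)).submatrix fun j => (0, j)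

lemma sum_re_trace_eq {X : Type} [Fintype X] {Q : X → Matrix m m ℂ →ₗ[ℂ] Matrix l l ℂ}
    (hTP : ∀ M, ∑ x, (Q x M).trace = M.trace) (M : Matrix m m ℂ) :
    ∑ x, (Q x M).trace.re = M.trace.re := by
  rw [← Complex.re_sum, hTP]

lemma isProb_re_trace {M C X : Type} [Fintype M] [Fintype C] [Fintype X]
    {P : X → (Matrix M M ℂ →ₗ[ℂ] Matrix C C ℂ)} (hCP : ∀ x, IsCP (P x))
    (hTP : ∀ ω, ∑ x, (P x ω).trace = ω.trace) {ρ : Matrix M M ℂ} (hρ : IsState ρ) :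
    IsProb fun x => (P x ρ).trace.re :=
  ⟨fun x => ((hCP x).posSemidef_map hρ.1).re_trace_nonneg,
    by rw [sum_re_trace_eq hTP, hρ.2, Complex.one_re]⟩

open scoped MatrixOrder Matrix.Norms.L2Operator in
lemma sum_traceNorm_map_le [DecidableEq m] [DecidableEq l] {X : Type} [Fintype X]
    {Q : X → Matrix m m ℂ →ₗ[ℂ] Matrix l l ℂ} (hQ : ∀ x M, M.PosSemidef → (Q x M).PosSemidef)
    (hTP : ∀ M, ∑ x, (Q x M).trace = M.trace) {H : Matrix m m ℂ} (hH : H.IsHermitian) :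
    ∑ x, traceNorm (Q x H) ≤ traceNorm H := by
  have hpos : (H⁺).PosSemidef := (CFC.posPart_nonneg H).posSemidef
  have hneg : (H⁻).PosSemidef := (CFC.negPart_nonneg H).posSemidef
  calc ∑ x, traceNorm (Q x H) ≤ ∑ x, ((Q x H⁺).trace.re + (Q x H⁻).trace.re) :=
        Finset.sum_le_sum fun x _ => by
          have hsplit : Q x H = Q x H⁺ - Q x H⁻ := by
            rw [← map_sub, CFC.posPart_sub_negPart H hH]
          rw [hsplit]
          exact traceNorm_sub_le (hQ x _ hpos) (hQ x _ hneg)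
    _ = traceNorm H := by
        rw [Finset.sum_add_distrib, sum_re_trace_eq hTP, sum_re_trace_eq hTP,
          traceNorm_eq_re_trace_posPart_add_negPart hH]

lemma sum_traceNorm_ptrans_le {A B A' B' X : Type} [Fintype A] [DecidableEq A] [Fintype B]
    [DecidableEq B] [Fintype A'] [DecidableEq A'] [Fintype B'] [DecidableEq B'] [Fintype X]
    {P : X → (Matrix (A × B) (A × B) ℂ →ₗ[ℂ] Matrix (A' × B') (A' × B') ℂ)}
    (hP : IsSelectivePPT P) {σ : Matrix (A × B) (A × B) ℂ} (hσ : σ.IsHermitian) :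
    ∑ x, traceNorm (ptrans (P x σ)) ≤ traceNorm (ptrans σ) := by
  have h := sum_traceNorm_map_le (Q := fun x => ptransL ∘ₗ P x ∘ₗ ptransL)
    (fun x _ hM => (hP.2.1 x).posSemidef_map hM) (fun M => by simpa using hP.2.2 (ptrans M))
    (isHermitian_ptrans hσ)
  simpa using h

end CompletelyPositive

section Flag

variable {M C X : Type} [Fintype M] [Fintype C] [Fintype X] [DecidableEq X]

lemma trace_cqOp (p : X → ℝ) (K : X → Matrix C C ℂ) :
    (cqOp p K).trace = ∑ x, (p x : ℂ) * (K x).trace := by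
  simp [trace, cqOp, Fintype.sum_prod_type, Finset.mul_sum]

noncomputable def flagMap (P : X → (Matrix M M ℂ →ₗ[ℂ] Matrix C C ℂ)) :
    Matrix M M ℂ →ₗ[ℂ] Matrix (X × C) (X × C) ℂ where
  toFun ω := cqOp 1 fun x => P x ω
  map_add' ω₁ ω₂ := by
    ext p q
    by_cases h : p.1 = q.1 <;> simp [cqOp, h]
  map_smul' c ω := by
    ext p q
    by_cases h : p.1 = q.1 <;> simp [cqOp, h]

lemma isCP_flagMap {P : X → (Matrix M M ℂ →ₗ[ℂ] Matrix C C ℂ)} (hP : ∀ x, IsCP (P x)) :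
    IsCP (flagMap P) := fun k Y hY => by
  have hblock : matExt (flagMap P) k Y = (blockDiagonal fun x => matExt (P x) k Y).submatrix
      (fun p => ((p.1, p.2.2), p.2.1)) (fun p => ((p.1, p.2.2), p.2.1)) := by
    ext ⟨i, x, c⟩ ⟨j, y, d⟩
    by_cases h : x = y <;> simp [matExt, flagMap, cqOp, blockDiagonal_apply, h]
  rw [hblock]
  exact (posSemidef_blockDiagonal fun x => hP x k Y hY).submatrix _

lemma isTP_flagMap {P : X → (Matrix M M ℂ →ₗ[ℂ] Matrix C C ℂ)}
    (hTP : ∀ ω, ∑ x, (P x ω).trace = ω.trace) : IsTP (flagMap P) := fun ω => by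
  simpa [flagMap, trace_cqOp] using hTP ω

end Flag

section Normalize

variable {n : Type} [Fintype n]

noncomputable def normalizeOr (M τ : Matrix n n ℂ) : Matrix n n ℂ :=
  if 0 < M.trace.re then M.trace.re⁻¹ • M else τ

lemma normalizeOr_of_pos {M : Matrix n n ℂ} (τ : Matrix n n ℂ) (hM : 0 < M.trace.re) :
    normalizeOr M τ = M.trace.re⁻¹ • M :=
  if_pos hM

lemma isState_normalizeOr {M τ : Matrix n n ℂ} (hM : M.PosSemidef) (hτ : IsState τ) :
    IsState (normalizeOr M τ) := by
  unfold normalizeOr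
  split_ifs with h
  exacts [isState_inv_re_trace_smul hM h, hτ]

lemma cqOp_normalizeOr {X : Type} [DecidableEq X] {K : X → Matrix n n ℂ}
    (hK : ∀ x, (K x).PosSemidef) (τ : Matrix n n ℂ) :
    cqOp (fun x => (K x).trace.re) (fun x => normalizeOr (K x) τ) = cqOp 1 K := by
  ext ⟨x, c⟩ ⟨y, d⟩
  by_cases hxy : x = y
  · subst hxy
    by_cases h : 0 < (K x).trace.re
    · simp [cqOp, normalizeOr_of_pos τ h, h.ne']
    · have h0 : (K x).trace = 0 := by
        rw [← (hK x).ofReal_re_trace, le_antisymm (not_lt.mp h) (hK x).re_trace_nonneg]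
        simp
      simp [cqOp, (hK x).trace_eq_zero_iff.mp h0]
  · simp [cqOp, hxy]

end Normalize

lemma sum_mul_logb_div_le {X : Type} [Fintype X] {p q t : X → ℝ} {T : ℝ} (hp : IsProb p)
    (hq : ∀ x, 0 < p x → 0 < q x) (ht : ∀ x, 0 < p x → 0 < t x)
    (hT : ∑ x ∈ Finset.univ.filter (0 < p ·), t x ≤ T) :
    ∑ x ∈ Finset.univ.filter (0 < p ·), p x * Real.logb 2 (t x / q x)
      ≤ ∑ x, p x * Real.logb 2 (p x / q x) + Real.logb 2 T := by
  set F := Finset.univ.filter (0 < p ·)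
  have hpF : ∀ x ∈ F, 0 < p x := fun x hx => (Finset.mem_filter.mp hx).2
  have hsupp : ∀ f : X → ℝ, ∑ x ∈ F, p x * f x = ∑ x, p x * f x := fun f =>
    Finset.sum_filter_of_ne fun x _ hx => (hp.1 x).lt_of_ne' (left_ne_zero_of_mul hx)
  have hF1 : ∑ x ∈ F, p x = 1 := by simpa [hp.2] using hsupp 1
  have hjensen : ∑ x ∈ F, p x * Real.logb 2 (t x / p x) ≤ Real.logb 2 T := by
    have h := strictConcaveOn_log_Ioi.concaveOn.le_map_sum (t := F) (p := fun x => t x / p x)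
      (fun x _ => hp.1 x) hF1 fun x hx => div_pos (ht x (hpF x hx)) (hpF x hx)
    simp only [smul_eq_mul, Finset.sum_congr rfl fun x hx => mul_div_cancel₀ (t x) (hpF x hx).ne']
      at h
    have hFne : F.Nonempty := Finset.nonempty_of_sum_ne_zero (by rw [hF1]; exact one_ne_zero)
    have hlog := h.trans (Real.log_le_log (Finset.sum_pos (fun x hx => ht x (hpF x hx)) hFne) hT)
    simp_rw [Real.logb, mul_div_assoc', ← Finset.sum_div]
    exact div_le_div_of_nonneg_right hlog (Real.log_pos one_lt_two).le
  calc ∑ x ∈ F, p x * Real.logb 2 (t x / q x)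
      = ∑ x ∈ F, p x * Real.logb 2 (p x / q x) + ∑ x ∈ F, p x * Real.logb 2 (t x / p x) := by
        rw [← Finset.sum_add_distrib]
        refine Finset.sum_congr rfl fun x hx => ?_
        have hpx := hpF x hx
        rw [← mul_add, ← Real.logb_mul (div_pos hpx (hq x hpx)).ne' (div_pos (ht x hpx) hpx).ne',
          div_mul_div_cancel₀' hpx.ne']
    _ ≤ ∑ x, p x * Real.logb 2 (p x / q x) + Real.logb 2 T := by
        rw [hsupp]
        gcongr

lemma _root_.EReal.coe_finset_sum {ι : Type} (s : Finset ι) (f : ι → ℝ) :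
    ((∑ i ∈ s, f i : ℝ) : EReal) = ∑ i ∈ s, (f i : EReal) :=
  map_sum (⟨⟨Real.toEReal, EReal.coe_zero⟩, EReal.coe_add⟩ : ℝ →+ EReal) f s

lemma _root_.EReal.sum_coe_mul_ne_bot {ι : Type} (s : Finset ι) {p : ι → ℝ} {d : ι → EReal}
    (hp : ∀ i ∈ s, 0 ≤ p i) (hd : ∀ i ∈ s, d i ≠ ⊥) : ∑ i ∈ s, (p i : EReal) * d i ≠ ⊥ :=
  Finset.sum_induction _ (· ≠ ⊥) (fun _ _ ha hb => EReal.add_ne_bot_iff.mpr ⟨ha, hb⟩)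
    EReal.zero_ne_bot fun i hi => (EReal.mul_ne_bot _ _).mpr
      ⟨.inl (EReal.coe_ne_bot _), .inr (hd i hi), .inl (EReal.coe_ne_top _),
        .inl (EReal.coe_nonneg.mpr (hp i hi))⟩

theorem sum_mul_le_cRelEnt_add {X : Type} [Fintype X] {p q t : X → ℝ} {T : ℝ} {R d : X → EReal}
    (hp : IsProb p) (hq : ∀ x, 0 ≤ q x) (hqt : ∀ x, q x ≤ t x)
    (hT : ∑ x ∈ Finset.univ.filter (0 < p ·), t x ≤ T) (hd : ∀ x, d x ≠ ⊥)
    (hR : ∀ x, 0 < p x → 0 < q x → R x ≤ d x + ((Real.logb 2 (t x / q x) : ℝ) : EReal)) :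
    ∑ x ∈ Finset.univ.filter (0 < p ·), (p x : EReal) * R x
      ≤ cRelEnt p q + ∑ x, (p x : EReal) * d x + ((Real.logb 2 T : ℝ) : EReal) := by
  set F := Finset.univ.filter (0 < p ·)
  by_cases hsupp : ∀ x, 0 < p x → 0 < q x
  · have hpq : cRelEnt p q = ((∑ x, p x * Real.logb 2 (p x / q x) : ℝ) : EReal) :=
      if_pos fun x hx => (hsupp x ((hp.1 x).lt_of_ne' hx)).ne'
    calc ∑ x ∈ F, (p x : EReal) * R x
        ≤ ∑ x ∈ F, ((p x : EReal) * d x + ((p x * Real.logb 2 (t x / q x) : ℝ) : EReal)) :=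
          Finset.sum_le_sum fun x hx => by
            have hpx : 0 < p x := (Finset.mem_filter.mp hx).2
            rw [EReal.coe_mul, ← EReal.left_distrib_of_nonneg_of_ne_top
              (EReal.coe_nonneg.mpr hpx.le) (EReal.coe_ne_top _)]
            exact mul_le_mul_of_nonneg_left (hR x hpx (hsupp x hpx)) (EReal.coe_nonneg.mpr hpx.le)
      _ = ∑ x, (p x : EReal) * d x + ((∑ x ∈ F, p x * Real.logb 2 (t x / q x) : ℝ) : EReal) := by
          rw [Finset.sum_add_distrib, EReal.coe_finset_sum]
          congr 1
          exact Finset.sum_filter_of_ne fun x _ hx => (hp.1 x).lt_of_ne' fun h => hx (by simp [h])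
      _ ≤ ∑ x, (p x : EReal) * d x +
            ((∑ x, p x * Real.logb 2 (p x / q x) + Real.logb 2 T : ℝ) : EReal) := by
          gcongr
          exact sum_mul_logb_div_le hp hsupp (fun x hx => (hsupp x hx).trans_le (hqt x)) hT
      _ = _ := by
          rw [hpq, EReal.coe_add]
          abel
  · push Not at hsupp
    obtain ⟨x, hpx, hqx⟩ := hsupp
    have hpq : cRelEnt p q = ⊤ := if_neg fun h => h x hpx.ne' (le_antisymm hqx (hq x))
    rw [hpq, EReal.top_add_of_ne_bot (EReal.sum_coe_mul_ne_bot _ (fun x _ => hp.1 x)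
      fun x _ => hd x), EReal.top_add_coe]
    exact le_top

section GeneralizedRains

abbrev Divergence : Type 1 :=
  ∀ (k : Type) [Fintype k] [DecidableEq k], Matrix k k ℂ → Matrix k k ℂ → EReal

def DataProcessingIneq (𝒟 : Divergence) : Prop :=
  ∀ (k l : Type) [Fintype k] [DecidableEq k] [Fintype l] [DecidableEq l]
    (N : Matrix k k ℂ →ₗ[ℂ] Matrix l l ℂ), IsCP N → IsTP N →
    ∀ (ω τ : Matrix k k ℂ), IsState ω → τ.PosSemidef → 𝒟 k ω τ ≥ 𝒟 l (N ω) (N τ)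

def DirectSumIneq (𝒟 : Divergence) : Prop :=
  ∀ (Y C : Type) [Fintype Y] [DecidableEq Y] [Fintype C] [DecidableEq C]
    (p q : Y → ℝ) (κ lam : Y → Matrix C C ℂ),
    IsProb p → (∀ y, IsState (κ y)) → (∀ y, 0 ≤ q y) → (∀ y, (lam y).PosSemidef) →
      𝒟 (Y × C) (cqOp p κ) (cqOp q lam) ≥ cRelEnt p q + ∑ y, (p y : EReal) * 𝒟 C (κ y) (lam y)

noncomputable def genRains (𝒟 : Divergence) {a b : Type} [Fintype a] [DecidableEq a] [Fintype b]
    [DecidableEq b] (ρ : Matrix (a × b) (a × b) ℂ) : EReal :=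
  ⨅ σ : {σ : Matrix (a × b) (a × b) ℂ // IsState σ},
    (𝒟 (a × b) ρ σ.1 + ((Real.logb 2 (traceNorm (ptrans σ.1)) : ℝ) : EReal))

variable {𝒟 : Divergence}

theorem cRelEnt_add_sum_le {M C X : Type} [Fintype M] [DecidableEq M] [Fintype C] [DecidableEq C]
    [Fintype X] [DecidableEq X] (hDP : DataProcessingIneq 𝒟) (hDS : DirectSumIneq 𝒟)
    {P : X → (Matrix M M ℂ →ₗ[ℂ] Matrix C C ℂ)} (hCP : ∀ x, IsCP (P x))
    (hTP : ∀ ω, ∑ x, (P x ω).trace = ω.trace) {ρ σ : Matrix M M ℂ} (hρ : IsState ρ)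
    (hσ : σ.PosSemidef) {τ : Matrix C C ℂ} (hτ : IsState τ) :
    cRelEnt (fun x => (P x ρ).trace.re) (fun x => (P x σ).trace.re) +
        ∑ x, ((P x ρ).trace.re : EReal) * 𝒟 C (normalizeOr (P x ρ) τ) (normalizeOr (P x σ) τ)
      ≤ 𝒟 M ρ σ := by
  have hPρ x := (hCP x).posSemidef_map hρ.1
  have hPσ x := (hCP x).posSemidef_map hσ
  calc _ ≤ 𝒟 (X × C) (cqOp (fun x => (P x ρ).trace.re) fun x => normalizeOr (P x ρ) τ)
        (cqOp (fun x => (P x σ).trace.re) fun x => normalizeOr (P x σ) τ) :=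
        hDS _ _ _ _ _ _ (isProb_re_trace hCP hTP hρ) (fun x => isState_normalizeOr (hPρ x) hτ)
          (fun x => (hPσ x).re_trace_nonneg) fun x => (isState_normalizeOr (hPσ x) hτ).1
    _ = 𝒟 (X × C) (flagMap P ρ) (flagMap P σ) := by
        rw [cqOp_normalizeOr hPρ, cqOp_normalizeOr hPσ]
        rfl
    _ ≤ 𝒟 M ρ σ := hDP _ _ _ (isCP_flagMap hCP) (isTP_flagMap hTP) ρ σ hρ hσ

lemma genRains_le {a b : Type} [Fintype a] [DecidableEq a] [Fintype b] [DecidableEq b]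
    (ω : Matrix (a × b) (a × b) ℂ) {M : Matrix (a × b) (a × b) ℂ} (hM : M.PosSemidef)
    (hM0 : 0 < M.trace.re) :
    genRains 𝒟 ω ≤ 𝒟 (a × b) ω (M.trace.re⁻¹ • M) +
      ((Real.logb 2 (traceNorm (ptrans M) / M.trace.re) : ℝ) : EReal) := by
  refine (iInf_le _ ⟨_, isState_inv_re_trace_smul hM hM0⟩).trans_eq ?_
  rw [ptrans_smul, traceNorm_smul _ (inv_nonneg.mpr hM0.le), inv_mul_eq_div]

theorem sum_mul_genRains_le {A B A' B' X : Type} [Fintype A] [DecidableEq A] [Fintype B]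
    [DecidableEq B] [Fintype A'] [DecidableEq A'] [Fintype B'] [DecidableEq B'] [Fintype X]
    [DecidableEq X]
    (hne : ∀ ω τ : Matrix (A' × B') (A' × B') ℂ, IsState ω → τ.PosSemidef → 𝒟 (A' × B') ω τ ≠ ⊥)
    (hDP : DataProcessingIneq 𝒟) (hDS : DirectSumIneq 𝒟)
    {P : X → (Matrix (A × B) (A × B) ℂ →ₗ[ℂ] Matrix (A' × B') (A' × B') ℂ)}
    (hP : IsSelectivePPT P) {ρ σ : Matrix (A × B) (A × B) ℂ} (hρ : IsState ρ) (hσ : IsState σ) :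
    ∑ x ∈ Finset.univ.filter (fun x => 0 < (P x ρ).trace.re),
        ((P x ρ).trace.re : EReal) * genRains 𝒟 ((P x ρ).trace.re⁻¹ • P x ρ)
      ≤ 𝒟 (A × B) ρ σ + ((Real.logb 2 (traceNorm (ptrans σ)) : ℝ) : EReal) := by
  have hCP := hP.1
  have hTP := hP.2.2
  have hPρ x := (hCP x).posSemidef_map hρ.1
  have hPσ x := (hCP x).posSemidef_map hσ.1
  have : Nonempty (A' × B') := .map Prod.snd <|
    IsState.nonempty ⟨(isCP_flagMap hCP).posSemidef_map hρ.1, (isTP_flagMap hTP ρ).trans hρ.2⟩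
  obtain ⟨τ, hτ⟩ := exists_isState (n := A' × B')
  calc _ ≤ cRelEnt (fun x => (P x ρ).trace.re) (fun x => (P x σ).trace.re) +
          ∑ x, ((P x ρ).trace.re : EReal) *
            𝒟 (A' × B') (normalizeOr (P x ρ) τ) (normalizeOr (P x σ) τ) +
          ((Real.logb 2 (traceNorm (ptrans σ)) : ℝ) : EReal) := by
        refine sum_mul_le_cRelEnt_add (isProb_re_trace hCP hTP hρ)
          (fun x => (hPσ x).re_trace_nonneg)
          (fun x => by simpa using re_trace_le_traceNorm (isHermitian_ptrans (hPσ x).isHermitian))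
          ((Finset.sum_le_sum_of_subset_of_nonneg (Finset.filter_subset _ _)
            fun x _ _ => traceNorm_nonneg _).trans (sum_traceNorm_ptrans_le hP hσ.1.isHermitian))
          (fun x => hne _ _ (isState_normalizeOr (hPρ x) hτ) (isState_normalizeOr (hPσ x) hτ).1)
          fun x hpx hqx => ?_
        rw [normalizeOr_of_pos τ hpx, normalizeOr_of_pos τ hqx]
        exact genRains_le _ (hPσ x) hqx
    _ ≤ _ := by gcongr; exact cRelEnt_add_sum_le hDP hDS hCP hTP hρ hσ.1 hτ

end GeneralizedRains

/-- Selective PPT monotonicity of generalized Rains relative entropies: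
if `𝒟`, taking values in `ℝ ∪ {+∞}`, satisfies the data-processing inequality under all
CPTP maps and the direct-sum inequality for classical–quantum operators, then
`𝐑(ρ) := inf_{states σ} [𝒟(ρ‖σ) + log₂‖(id⊗T)(σ)‖₁]` satisfies
`𝐑(ρ) ≥ ∑_{x : p(x) > 0} p(x) 𝐑(ρ_x)` for every selective PPT operation `{P_x}`,
where `p(x) = Tr[P_x(ρ)]` and `ρ_x = P_x(ρ)/p(x)`. -/
theorem generalizedRains_selective_PPT_monotone {A B A' B' X : Type}
    [Fintype A] [DecidableEq A] [Fintype B] [DecidableEq B]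
    [Fintype A'] [DecidableEq A'] [Fintype B'] [DecidableEq B'] [Fintype X]
    (𝒟 : ∀ (k : Type) [Fintype k] [DecidableEq k], Matrix k k ℂ → Matrix k k ℂ → EReal)
    (hne : ∀ (k : Type) [Fintype k] [DecidableEq k] (ω τ : Matrix k k ℂ),
      IsState ω → τ.PosSemidef → 𝒟 k ω τ ≠ ⊥)
    (hDP : ∀ (k l : Type) [Fintype k] [DecidableEq k] [Fintype l] [DecidableEq l]
      (N : Matrix k k ℂ →ₗ[ℂ] Matrix l l ℂ), IsCP N → IsTP N →
      ∀ (ω τ : Matrix k k ℂ), IsState ω → τ.PosSemidef →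
        𝒟 k ω τ ≥ 𝒟 l (N ω) (N τ))
    (hDS : ∀ (Y C : Type) [Fintype Y] [DecidableEq Y] [Fintype C] [DecidableEq C]
      (p q : Y → ℝ) (κ lam : Y → Matrix C C ℂ),
      IsProb p → (∀ y, IsState (κ y)) → (∀ y, 0 ≤ q y) → (∀ y, (lam y).PosSemidef) →
        𝒟 (Y × C) (cqOp p κ) (cqOp q lam) ≥
          cRelEnt p q + ∑ y, (p y : EReal) * 𝒟 C (κ y) (lam y))
    (ρ : Matrix (A × B) (A × B) ℂ) (hρ : IsState ρ)
    (P : X → (Matrix (A × B) (A × B) ℂ →ₗ[ℂ] Matrix (A' × B') (A' × B') ℂ))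
    (hP : IsSelectivePPT P) :
    (⨅ σ : {σ : Matrix (A × B) (A × B) ℂ // IsState σ},
        (𝒟 (A × B) ρ σ.1 + ((Real.logb 2 (traceNorm (ptrans σ.1)) : ℝ) : EReal)))
      ≥ ∑ x ∈ Finset.univ.filter (fun x => 0 < ((P x) ρ).trace.re),
          (((P x) ρ).trace.re : EReal) *
            (⨅ σ : {σ : Matrix (A' × B') (A' × B') ℂ // IsState σ},
              (𝒟 (A' × B') (((((P x) ρ).trace.re)⁻¹ : ℝ) • (P x) ρ) σ.1 +
                ((Real.logb 2 (traceNorm (ptrans σ.1)) : ℝ) : EReal))) :=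
  le_iInf fun σ => sum_mul_genRains_le (hne _) hDP hDS hP hρ σ.2

end RainsPaper
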